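/- arXiv:1410.7353 — 3 statements merged into one kernel-verified Lean document; each statement's English description precedes it below -/
import Mathlib

section
/- The function x ↦ H_b(Q(√x)) is convex and decreasing on [0, ∞), where H_b is the binary entropy function and Q is the Gaussian tail probability Q(t) = ∫_t^∞ (1/√(2π)) e^{-s²/2} ds. -/
/-- Binary entropy function (base-2), with the convention `logb 2 0 = 0`. -/
noncomputable def binEnt (p : ℝ) : ℝ :=
  -(p * Real.logb 2 p) - (1 - p) * Real.logb 2 (1 - p)

/-- Standard normal tail probability `Q(t) = ∫_t^∞ (1/√(2π)) e^{-s²/2} ds`. -/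
noncomputable def gaussQ (t : ℝ) : ℝ :=
  ∫ s in Set.Ioi t, Real.exp (-s^2 / 2) / Real.sqrt (2 * Real.pi)

/-!
Write t = √x, q = Q(t) and φ for the standard Gaussian density, so that Q' = -φ. Monotonicity is
immediate: Q(√x) decreases from Q(0) = 1/2 and H_b is increasing on [0, 1/2]. For convexity,
the chain rule gives d/dx H_b(Q(√x)) = -S(t) / (2 log 2) with
S(t) = log((1 - q) / q) · φ(t) / t, so it suffices that S decreases on (0, ∞), and S'(t) ≤ 0
unwinds to t φ(t) ≤ log((1 - q) / q) · q(1 - q) · (1 + t²).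
For t ≥ 0.9 this follows from the Mills-ratio bound t φ(t) ≤ (1 + t²) q, the estimate
log((1 - q) / q) ≥ 2(1 - 2q) and q ≤ Q(0.9) < 0.19. For t ≤ 0.9 it follows from the Taylor
bounds φ(0)(t - t³/6) ≤ 1/2 - q ≤ t φ(0) and φ(t)(1 + t²/2) ≤ φ(0), which turn it into a
polynomial inequality in t².
-/

open Real Set Filter MeasureTheory Topology

noncomputable def gaussPDF (t : ℝ) : ℝ := exp (-t ^ 2 / 2) / √(2 * π)

lemma gaussPDF_pos (t : ℝ) : 0 < gaussPDF t := by
  unfold gaussPDF; positivity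

lemma continuous_gaussPDF : Continuous gaussPDF := by
  unfold gaussPDF; fun_prop

lemma integrable_gaussPDF : Integrable gaussPDF := by
  convert (integrable_exp_neg_mul_sq (b := 1 / 2) (by norm_num)).div_const (√(2 * π)) using 2
  unfold gaussPDF; ring_nf

lemma hasDerivAt_gaussPDF (t : ℝ) : HasDerivAt gaussPDF (-t * gaussPDF t) t :=
  (((hasDerivAt_pow 2 t).neg.div_const 2).exp.div_const (√(2 * π))).congr_deriv <| by
    simp [gaussPDF]; ring

lemma tendsto_gaussPDF_atTop : Tendsto gaussPDF atTop (𝓝 0) := by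
  have h : Tendsto (fun t : ℝ => -t ^ 2 / 2) atTop atBot :=
    (tendsto_neg_atTop_atBot.comp (tendsto_pow_atTop two_ne_zero)).atBot_div_const two_pos
  have h' := (tendsto_exp_atBot.comp h).div_const (√(2 * π))
  rwa [zero_div] at h'

lemma gaussPDF_zero_sq : gaussPDF 0 ^ 2 = 1 / (2 * π) := by
  rw [gaussPDF, div_pow, sq_sqrt (by positivity)]
  norm_num

lemma gaussPDF_mul_one_add_sq_div_two_le (t : ℝ) : gaussPDF t * (1 + t ^ 2 / 2) ≤ gaussPDF 0 := by
  have h : gaussPDF 0 = gaussPDF t * exp (t ^ 2 / 2) := by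
    simp only [gaussPDF, div_mul_eq_mul_div, ← exp_add]; ring_nf
  rw [h]
  exact mul_le_mul_of_nonneg_left (by linarith [add_one_le_exp (t ^ 2 / 2)]) (gaussPDF_pos t).le

lemma gaussPDF_le_gaussPDF_zero (t : ℝ) : gaussPDF t ≤ gaussPDF 0 :=
  le_trans (le_mul_of_one_le_right (gaussPDF_pos t).le (le_add_of_nonneg_right (by positivity)))
    (gaussPDF_mul_one_add_sq_div_two_le t)

lemma gaussPDF_zero_mul_le_gaussPDF (t : ℝ) : gaussPDF 0 * (1 - t ^ 2 / 2) ≤ gaussPDF t := by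
  have h : gaussPDF t = gaussPDF 0 * exp (-t ^ 2 / 2) := by simp [gaussPDF]; ring
  rw [h]
  exact mul_le_mul_of_nonneg_left (by linarith [add_one_le_exp (-t ^ 2 / 2)]) (gaussPDF_pos 0).le

lemma gaussQ_sub_gaussQ (a b : ℝ) : gaussQ a - gaussQ b = ∫ s in a..b, gaussPDF s :=
  intervalIntegral.integral_Ioi_sub_Ioi' integrable_gaussPDF.integrableOn
    integrable_gaussPDF.integrableOn

lemma gaussQ_zero : gaussQ 0 = 1 / 2 := by
  have h := integral_gaussian_Ioi (1 / 2)
  simp_rw [show π / (1 / 2) = 2 * π by ring, show ∀ s : ℝ, -(1 / 2) * s ^ 2 = -s ^ 2 / 2 from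
    fun s => by ring] at h
  rw [gaussQ, integral_div, h]
  field_simp

lemma hasDerivAt_gaussQ (t : ℝ) : HasDerivAt gaussQ (-gaussPDF t) t := by
  have h := (intervalIntegral.integral_hasDerivAt_right (continuous_gaussPDF.intervalIntegrable 0 t)
    continuous_gaussPDF.aestronglyMeasurable.stronglyMeasurableAtFilter
    continuous_gaussPDF.continuousAt).const_sub (gaussQ 0)
  exact h.congr_of_eventuallyEq (Eventually.of_forall fun u => by simp [← gaussQ_sub_gaussQ 0 u])

lemma continuous_gaussQ : Continuous gaussQ :=
  continuous_iff_continuousAt.2 fun t => (hasDerivAt_gaussQ t).continuousAt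

lemma strictAnti_gaussQ : StrictAnti gaussQ :=
  strictAnti_of_hasDerivAt_neg hasDerivAt_gaussQ fun t => neg_neg_of_pos (gaussPDF_pos t)

lemma tendsto_gaussQ_atTop : Tendsto gaussQ atTop (𝓝 0) :=
  tendsto_integral_Ioi_zero tendsto_id

lemma gaussQ_pos (t : ℝ) : 0 < gaussQ t :=
  (strictAnti_gaussQ.antitone.le_of_tendsto tendsto_gaussQ_atTop (t + 1)).trans_lt
    (strictAnti_gaussQ (lt_add_one t))

lemma gaussQ_lt_half {t : ℝ} (ht : 0 < t) : gaussQ t < 1 / 2 :=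
  gaussQ_zero ▸ strictAnti_gaussQ ht

lemma half_sub_gaussQ_eq (t : ℝ) : 1 / 2 - gaussQ t = ∫ s in (0:ℝ)..t, gaussPDF s := by
  rw [← gaussQ_zero, gaussQ_sub_gaussQ]

lemma half_sub_gaussQ_le {t : ℝ} (ht : 0 ≤ t) : 1 / 2 - gaussQ t ≤ t * gaussPDF 0 := by
  rw [half_sub_gaussQ_eq]
  calc ∫ s in (0:ℝ)..t, gaussPDF s ≤ ∫ _ in (0:ℝ)..t, gaussPDF 0 :=
        intervalIntegral.integral_mono_on ht (continuous_gaussPDF.intervalIntegrable 0 t)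
          intervalIntegrable_const fun s _ => gaussPDF_le_gaussPDF_zero s
    _ = t * gaussPDF 0 := by simp

lemma gaussPDF_zero_mul_le_half_sub_gaussQ {t : ℝ} (ht : 0 ≤ t) :
    gaussPDF 0 * (t - t ^ 3 / 6) ≤ 1 / 2 - gaussQ t := by
  rw [half_sub_gaussQ_eq]
  calc gaussPDF 0 * (t - t ^ 3 / 6) = ∫ s in (0:ℝ)..t, gaussPDF 0 * (1 - s ^ 2 / 2) := by
        rw [intervalIntegral.integral_const_mul]
        congr 1
        simp only [intervalIntegral.integral_sub intervalIntegrable_const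
          (((continuous_pow 2).div_const 2).intervalIntegrable 0 t), intervalIntegral.integral_div,
          integral_pow]
        norm_num; ring
    _ ≤ ∫ s in (0:ℝ)..t, gaussPDF s :=
        intervalIntegral.integral_mono_on ht (Continuous.intervalIntegrable (by fun_prop) 0 t)
          (continuous_gaussPDF.intervalIntegrable 0 t) fun s _ => gaussPDF_zero_mul_le_gaussPDF s

lemma mul_gaussPDF_le_mul_gaussQ (t : ℝ) : t * gaussPDF t ≤ (1 + t ^ 2) * gaussQ t := by
  set g : ℝ → ℝ := fun s => s * gaussPDF s / (1 + s ^ 2)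
  have hg : ∀ s, HasDerivAt (fun s => gaussQ s - g s) (-(2 * gaussPDF s / (1 + s ^ 2) ^ 2)) s := by
    intro s
    have hden : HasDerivAt (fun s : ℝ => 1 + s ^ 2) (2 * s) s := by
      simpa using (hasDerivAt_pow 2 s).const_add 1
    refine ((hasDerivAt_gaussQ s).sub
      (((hasDerivAt_id' s).mul (hasDerivAt_gaussPDF s)).div hden (by positivity))).congr_deriv ?_
    simp only [Pi.mul_apply]
    field_simp
    ring
  have hanti : Antitone fun s => gaussQ s - g s :=
    antitone_of_hasDerivAt_nonpos hg fun s =>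
      neg_nonpos.2 (by have := gaussPDF_pos s; positivity)
  have hg0 : Tendsto g atTop (𝓝 0) := by
    refine tendsto_of_tendsto_of_tendsto_of_le_of_le' tendsto_const_nhds tendsto_gaussPDF_atTop
      ?_ ?_ <;> filter_upwards [eventually_ge_atTop 0] with s hs
    · have := gaussPDF_pos s; positivity
    · rw [div_le_iff₀ (by positivity)]
      nlinarith [gaussPDF_pos s, sq_nonneg (s - 1)]
  have := hanti.le_of_tendsto (by simpa using tendsto_gaussQ_atTop.sub hg0) t
  have hpos : (0:ℝ) < 1 + t ^ 2 := by positivity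
  simp only [g, sub_nonneg, div_le_iff₀ hpos] at this
  linarith

lemma two_mul_le_log_one_add_sub_log_one_sub {x : ℝ} (h0 : 0 ≤ x) (h1 : x < 1) :
    2 * x ≤ log (1 + x) - log (1 - x) := by
  have h := hasSum_log_sub_log_of_abs_lt_one (by rwa [abs_of_nonneg h0])
  simpa using le_hasSum h 0 fun k _ => by positivity

lemma two_mul_one_sub_two_mul_le_log_sub_log {q : ℝ} (h0 : 0 < q) (h1 : q ≤ 1 / 2) :
    2 * (1 - 2 * q) ≤ log (1 - q) - log q := by
  calc 2 * (1 - 2 * q) ≤ log (1 + (1 - 2 * q)) - log (1 - (1 - 2 * q)) :=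
        two_mul_le_log_one_add_sub_log_one_sub (by linarith) (by linarith)
    _ = log (2 * (1 - q)) - log (2 * q) := by ring_nf
    _ = log (1 - q) - log q := by
        rw [log_mul two_ne_zero (by linarith), log_mul two_ne_zero h0.ne']; ring

lemma gaussQ_nine_tenths_le : gaussQ (9 / 10) ≤ 19 / 100 := by
  have h := gaussPDF_zero_mul_le_half_sub_gaussQ (t := 9 / 10) (by norm_num)
  have hφ : 3984 / 10000 ≤ gaussPDF 0 := by
    have hsq : 1 / (63 / 10) ≤ gaussPDF 0 ^ 2 := by
      rw [gaussPDF_zero_sq]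
      exact one_div_le_one_div_of_le (by positivity) (by linarith [pi_lt_d2])
    nlinarith [gaussPDF_pos 0]
  nlinarith

lemma mul_gaussPDF_le_log_odds_mul_of_le_nine_tenths {t : ℝ} (ht0 : 0 < t) (ht : t ≤ 9 / 10) :
    t * gaussPDF t ≤
      (log (1 - gaussQ t) - log (gaussQ t)) * (gaussQ t * (1 - gaussQ t)) * (1 + t ^ 2) := by
  set q := gaussQ t
  have ht2 : t ^ 2 ≤ 81 / 100 := by nlinarith
  have hq : q < 1 / 2 := gaussQ_lt_half ht0
  have hL : 4 * (1 / 2 - q) ≤ log (1 - q) - log q := by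
    linarith [two_mul_one_sub_two_mul_le_log_sub_log (gaussQ_pos t) hq.le]
  have hd : gaussPDF t * (1 + t ^ 2 / 2) * (t - t ^ 3 / 6) ≤ 1 / 2 - q :=
    (mul_le_mul_of_nonneg_right (gaussPDF_mul_one_add_sq_div_two_le t) (by nlinarith)).trans
      (gaussPDF_zero_mul_le_half_sub_gaussQ ht0.le)
  -- q(1 - q) = 1/4 - (1/2 - q)² and (1/2 - q)² ≤ t² φ(0)² = t² / (2π)
  have hqq : 1 / 4 - t ^ 2 / 6 ≤ q * (1 - q) := by
    have h1 := half_sub_gaussQ_le ht0.le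
    have h2 : (t * gaussPDF 0) ^ 2 ≤ t ^ 2 / 6 := by
      rw [mul_pow, gaussPDF_zero_sq, mul_one_div]
      exact div_le_div_of_nonneg_left (sq_nonneg t) (by norm_num) (by linarith [pi_gt_three])
    nlinarith
  have hpoly : 1 ≤ (1 + t ^ 2 / 2) * (1 - t ^ 2 / 6) * (1 - 2 * t ^ 2 / 3) * (1 + t ^ 2) := by
    have hu := sq_nonneg t
    nlinarith [mul_nonneg hu (sub_nonneg.2 ht2), mul_nonneg (mul_nonneg hu hu) (sub_nonneg.2 ht2)]
  have hL' : 4 * (gaussPDF t * (1 + t ^ 2 / 2) * (t - t ^ 3 / 6)) ≤ log (1 - q) - log q := by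
    linarith
  have hφ := gaussPDF_pos t
  calc t * gaussPDF t
      ≤ t * gaussPDF t * ((1 + t ^ 2 / 2) * (1 - t ^ 2 / 6) * (1 - 2 * t ^ 2 / 3) * (1 + t ^ 2)) :=
        le_mul_of_one_le_right (by positivity) hpoly
    _ = 4 * (gaussPDF t * (1 + t ^ 2 / 2) * (t - t ^ 3 / 6)) * (1 / 4 - t ^ 2 / 6) * (1 + t ^ 2) := by
        ring
    _ ≤ (log (1 - q) - log q) * (q * (1 - q)) * (1 + t ^ 2) :=
        mul_le_mul_of_nonneg_right (mul_le_mul hL' hqq (by linarith) (by linarith)) (by positivity)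

lemma mul_gaussPDF_le_log_odds_mul_of_nine_tenths_le {t : ℝ} (ht : 9 / 10 ≤ t) :
    t * gaussPDF t ≤
      (log (1 - gaussQ t) - log (gaussQ t)) * (gaussQ t * (1 - gaussQ t)) * (1 + t ^ 2) := by
  set q := gaussQ t
  have hq0 : 0 < q := gaussQ_pos t
  have hq : q ≤ 19 / 100 := (strictAnti_gaussQ.antitone ht).trans gaussQ_nine_tenths_le
  have hL := two_mul_one_sub_two_mul_le_log_sub_log hq0 (by linarith)
  calc t * gaussPDF t ≤ (1 + t ^ 2) * q := mul_gaussPDF_le_mul_gaussQ t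
    _ ≤ 2 * (1 - 2 * q) * (1 - q) * ((1 + t ^ 2) * q) :=
        le_mul_of_one_le_left (by positivity) (by nlinarith)
    _ ≤ (log (1 - q) - log q) * (1 - q) * ((1 + t ^ 2) * q) := by
        gcongr
        linarith
    _ = (log (1 - q) - log q) * (q * (1 - q)) * (1 + t ^ 2) := by ring

lemma mul_gaussPDF_le_log_odds_mul {t : ℝ} (ht : 0 < t) :
    t * gaussPDF t ≤
      (log (1 - gaussQ t) - log (gaussQ t)) * (gaussQ t * (1 - gaussQ t)) * (1 + t ^ 2) :=
  (le_total t (9 / 10)).elim (mul_gaussPDF_le_log_odds_mul_of_le_nine_tenths ht)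
    mul_gaussPDF_le_log_odds_mul_of_nine_tenths_le

noncomputable def binEntropyGaussQSlope (t : ℝ) : ℝ :=
  (log (1 - gaussQ t) - log (gaussQ t)) * (gaussPDF t / t)

lemma hasDerivAt_binEntropyGaussQSlope {t : ℝ} (ht : 0 < t) :
    HasDerivAt binEntropyGaussQSlope
      (gaussPDF t / (gaussQ t * (1 - gaussQ t) * t ^ 2) * (t * gaussPDF t -
        (log (1 - gaussQ t) - log (gaussQ t)) * (gaussQ t * (1 - gaussQ t)) * (1 + t ^ 2))) t := by
  have hq0 := gaussQ_pos t
  have hq1 : 1 - gaussQ t ≠ 0 := by linarith [gaussQ_lt_half ht]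
  have hlog := (((hasDerivAt_gaussQ t).const_sub 1).log hq1).sub
    ((hasDerivAt_gaussQ t).log hq0.ne')
  refine (hlog.mul ((hasDerivAt_gaussPDF t).div (hasDerivAt_id' t) ht.ne')).congr_deriv ?_
  simp only [Pi.sub_apply, Pi.div_apply]
  field_simp
  ring

lemma antitoneOn_binEntropyGaussQSlope : AntitoneOn binEntropyGaussQSlope (Ioi 0) := by
  refine antitoneOn_of_hasDerivWithinAt_nonpos (convex_Ioi 0)
    (fun t ht => (hasDerivAt_binEntropyGaussQSlope ht).continuousAt.continuousWithinAt)
    (fun t ht => (hasDerivAt_binEntropyGaussQSlope (by simpa using ht)).hasDerivWithinAt)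
    fun t ht => ?_
  rw [interior_Ioi, mem_Ioi] at ht
  have hq := gaussQ_pos t
  have hq1 := gaussQ_lt_half ht
  have hq' : 0 < 1 - gaussQ t := by linarith
  have := gaussPDF_pos t
  exact mul_nonpos_of_nonneg_of_nonpos (by positivity)
    (sub_nonpos.2 (mul_gaussPDF_le_log_odds_mul ht))

lemma hasDerivAt_binEntropy_gaussQ_sqrt {x : ℝ} (hx : 0 < x) :
    HasDerivAt (fun y => binEntropy (gaussQ √y)) (-binEntropyGaussQSlope √x / 2) x := by
  have ht : 0 < √x := sqrt_pos.2 hx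
  have hq0 := gaussQ_pos √x
  have hq1 : gaussQ √x ≠ 1 := by linarith [gaussQ_lt_half ht]
  refine ((hasDerivAt_binEntropy hq0.ne' hq1).comp x
    ((hasDerivAt_gaussQ √x).comp x (hasDerivAt_sqrt hx.ne'))).congr_deriv ?_
  simp only [binEntropyGaussQSlope]
  field_simp

lemma convexOn_binEntropy_gaussQ_sqrt :
    ConvexOn ℝ (Ici 0) fun x => binEntropy (gaussQ √x) := by
  refine MonotoneOn.convexOn_of_deriv (convex_Ici 0)
    (binEntropy_continuous.comp (continuous_gaussQ.comp continuous_sqrt)).continuousOn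
    (fun x hx => (hasDerivAt_binEntropy_gaussQ_sqrt
      (by simpa using hx)).differentiableAt.differentiableWithinAt) ?_
  rw [interior_Ici]
  intro x hx y hy hxy
  rw [(hasDerivAt_binEntropy_gaussQ_sqrt hx).deriv, (hasDerivAt_binEntropy_gaussQ_sqrt hy).deriv]
  have := antitoneOn_binEntropyGaussQSlope (sqrt_pos.2 hx) (sqrt_pos.2 hy) (sqrt_le_sqrt hxy)
  linarith

lemma antitoneOn_binEntropy_gaussQ_sqrt :
    AntitoneOn (fun x => binEntropy (gaussQ √x)) (Ici 0) := by
  intro x _ y _ hxy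
  have hQ : ∀ z, gaussQ √z ∈ Icc 0 2⁻¹ := fun z =>
    ⟨(gaussQ_pos _).le, by simpa [gaussQ_zero] using strictAnti_gaussQ.antitone (sqrt_nonneg z)⟩
  exact binEntropy_strictMonoOn.monotoneOn (hQ y) (hQ x)
    (strictAnti_gaussQ.antitone (sqrt_le_sqrt hxy))

lemma binEnt_eq_binEntropy_div (p : ℝ) : binEnt p = binEntropy p / log 2 := by
  simp only [binEnt, binEntropy, logb, log_inv]
  ring

/-- The map `x ↦ H_b(Q(√x))` is convex and decreasing on `[0, ∞)`. -/
theorem convexOn_antitoneOn_binEnt_gaussQ_sqrt :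
    ConvexOn ℝ (Set.Ici (0:ℝ)) (fun x => binEnt (gaussQ (Real.sqrt x))) ∧
    AntitoneOn (fun x => binEnt (gaussQ (Real.sqrt x))) (Set.Ici (0:ℝ)) := by
  have hlog : 0 < log 2 := log_pos one_lt_two
  simp only [binEnt_eq_binEntropy_div, div_eq_inv_mul]
  refine ⟨convexOn_binEntropy_gaussQ_sqrt.smul (inv_nonneg.2 hlog.le), ?_⟩
  exact fun x hx y hy hxy => mul_le_mul_of_nonneg_left
    (antitoneOn_binEntropy_gaussQ_sqrt hx hy hxy) (inv_nonneg.2 hlog.le)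
end

section
/- N hyperplanes through the origin of ℝ^d in general position (i.e., every subset of at most d of their normal vectors is linearly independent) divide ℝ^d into exactly 2·∑_{k=0}^{d-1} C(N-1, k) open regions (connected components of the complement). -/
/-!
A region of the arrangement is a cell on which every functional `⟨wᵢ, ·⟩` has a prescribed
nonzero sign. Cells are open and convex, so the regions are counted by the realizable sign
vectors. Removing the first hyperplane `H` merges exactly the pairs of regions separated only by
`H`, and such pairs correspond to the regions of the arrangement induced on `H`; hence the
number of regions satisfies `r(N, d) = r(N - 1, d) + r(N - 1, d - 1)`. General position passes to
both smaller arrangements, and Pascal's rule turns the recursion into `2 ∑_{k<d} C(N - 1, k)`.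
-/

open Module Set Function

theorem card_connectedComponents_eq_card_range {X Y : Type*} [TopologicalSpace X] {f : X → Y}
    (hf : IsLocallyConstant f) (hfib : ∀ x, IsPreconnected (f ⁻¹' {f x})) :
    Nat.card (ConnectedComponents X) = Nat.card (range f) := by
  let g : ConnectedComponents X → range f :=
    Quotient.lift (rangeFactorization f)
      fun x y (h : connectedComponent x = connectedComponent y) =>
        Subtype.ext <| hf.apply_eq_of_isPreconnected isPreconnected_connectedComponent
          mem_connectedComponent (h ▸ mem_connectedComponent)
  refine Nat.card_eq_of_bijective g ⟨fun a b hab => ?_, ?_⟩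
  · obtain ⟨x, rfl⟩ := ConnectedComponents.surjective_coe a
    obtain ⟨y, rfl⟩ := ConnectedComponents.surjective_coe b
    exact ConnectedComponents.coe_eq_coe'.mpr <|
      (hfib y).subset_connectedComponent rfl (congrArg Subtype.val hab)
  · rintro ⟨_, x, rfl⟩
    exact ⟨x, rfl⟩

lemma convex_setOf_sign_eq (c : SignType) : Convex ℝ {r : ℝ | SignType.sign r = c} := by
  cases c
  · simp only [SignType.zero_eq_zero, sign_eq_zero_iff, ofPred_eq_eq_singleton]
    exact convex_singleton 0
  · simp only [SignType.neg_eq_neg_one, sign_eq_neg_one_iff]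
    exact convex_Iio 0
  · simp only [SignType.pos_eq_one, sign_eq_one_iff]
    exact convex_Ioi 0

lemma isOpen_setOf_sign_eq {c : SignType} (hc : c ≠ 0) :
    IsOpen {r : ℝ | SignType.sign r = c} := by
  cases c
  · exact absurd rfl hc
  · simp only [SignType.neg_eq_neg_one, sign_eq_neg_one_iff]
    exact isOpen_Iio
  · simp only [SignType.pos_eq_one, sign_eq_one_iff]
    exact isOpen_Ioi

lemma sum_range_choose_succ (m e : ℕ) :
    ∑ k ∈ Finset.range (e + 1), (m + 1).choose k =
      ∑ k ∈ Finset.range (e + 1), m.choose k + ∑ k ∈ Finset.range e, m.choose k := by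
  rw [Finset.sum_range_succ' _ e, Finset.sum_range_succ' (fun k => m.choose k) e]
  simp only [Nat.choose_succ_succ', Finset.sum_add_distrib, Nat.choose_zero_right]
  ring

lemma ncard_eq_ncard_cons_one_add_ncard_cons_neg_one {m : ℕ} {S : Set (Fin (m + 1) → SignType)}
    (hS : ∀ s ∈ S, s 0 ≠ 0) :
    S.ncard = {t | Fin.cons 1 t ∈ S}.ncard + {t | Fin.cons (-1) t ∈ S}.ncard := by
  set P := {t | Fin.cons 1 t ∈ S}
  set M := {t | Fin.cons (-1) t ∈ S}
  have hsplit : S = Fin.cons 1 '' P ∪ Fin.cons (-1) '' M := by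
    ext s
    refine ⟨fun hs => ?_, by rintro (⟨t, ht, rfl⟩ | ⟨t, ht, rfl⟩) <;> exact ht⟩
    have hs' : Fin.cons (s 0) (Fin.tail s) ∈ S := by rwa [Fin.cons_self_tail]
    rcases (s 0).trichotomy with h | h | h
    · rw [h] at hs'
      exact Or.inr ⟨Fin.tail s, hs', by rw [← h, Fin.cons_self_tail]⟩
    · exact absurd h (hS s hs)
    · rw [h] at hs'
      exact Or.inl ⟨Fin.tail s, hs', by rw [← h, Fin.cons_self_tail]⟩
  have hdisj :
      Disjoint (Fin.cons 1 '' P : Set (Fin (m + 1) → SignType)) (Fin.cons (-1) '' M) := by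
    rw [disjoint_left]
    rintro _ ⟨a, -, rfl⟩ ⟨b, -, hba⟩
    exact absurd (Fin.cons_inj.mp hba).1 (by decide)
  conv_lhs => rw [hsplit]
  rw [ncard_union_eq hdisj, ncard_image_of_injective _ (Fin.cons_right_injective _),
    ncard_image_of_injective _ (Fin.cons_right_injective _)]

section GeneralPosition

variable {K V ι κ : Type*} [Field K] [AddCommGroup V] [Module K V]

variable (K) in
def InGeneralPosition (φ : ι → Dual K V) : Prop :=
  ∀ s : Finset ι, s.card ≤ finrank K V → LinearIndepOn K φ s

lemma InGeneralPosition.comp {φ : ι → Dual K V} (h : InGeneralPosition K φ) {e : κ → ι}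
    (he : Injective e) : InGeneralPosition K (φ ∘ e) := fun s hs => by
  have hφ := h (s.map ⟨e, he⟩) (by rwa [Finset.card_map])
  rw [Finset.coe_map, Function.Embedding.coeFn_mk] at hφ
  exact hφ.comp_of_image he.injOn

lemma InGeneralPosition.tail {m : ℕ} {f : Dual K V} {ψ : Fin m → Dual K V}
    (h : InGeneralPosition K (Fin.cons f ψ : Fin (m + 1) → Dual K V)) :
    InGeneralPosition K ψ := by
  simpa only [Fin.cons_comp_succ] using h.comp (Fin.succ_injective m)

lemma InGeneralPosition.ne_zero {φ : ι → Dual K V} (h : InGeneralPosition K φ)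
    (hV : 0 < finrank K V) (i : ι) : φ i ≠ 0 :=
  (linearIndepOn_singleton_iff K).mp (by simpa using h {i} (by rwa [Finset.card_singleton]))

lemma linearIndepOn_dualRestrict_ker {f : Dual K V} {ψ : ι → Dual K V} {s : Set ι}
    (hψ : LinearIndepOn K ψ s) (hf : f ∉ Submodule.span K (ψ '' s)) :
    LinearIndepOn K (fun i => (LinearMap.ker f).dualRestrict (ψ i)) s := by
  have hker : LinearMap.ker (LinearMap.ker f).dualRestrict ≤ K ∙ f := fun g hg => by
    rw [← range_const (c := f) (ι := Unit)]
    exact mem_span_of_iInf_ker_le_ker fun x hx =>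
      (Submodule.mem_dualAnnihilator g).mp hg x (by simpa using hx)
  have hf0 : f ≠ 0 := fun h => hf (h ▸ zero_mem _)
  refine hψ.map (Disjoint.mono_right hker ?_)
  rwa [← image_eq_range, Submodule.disjoint_span_singleton' hf0]

lemma InGeneralPosition.dualRestrict_ker [FiniteDimensional K V] {m : ℕ} {f : Dual K V}
    {ψ : Fin m → Dual K V} (h : InGeneralPosition K (Fin.cons f ψ : Fin (m + 1) → Dual K V))
    (hf : f ≠ 0) : InGeneralPosition K fun i => (LinearMap.ker f).dualRestrict (ψ i) := by
  intro s hs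
  have hrank := f.finrank_ker_add_one_of_ne_zero hf
  have h0 : (0 : Fin (m + 1)) ∉ Fin.succ '' (s : Set (Fin m)) := by simp [Fin.succ_ne_zero]
  have hind := h (insert 0 (s.map (Fin.succEmb m)))
    (by rw [Finset.card_insert_of_notMem (by simp), Finset.card_map]; omega)
  rw [Finset.coe_insert, Finset.coe_map, Fin.coe_succEmb, linearIndepOn_insert h0,
    image_image] at hind
  simp only [Fin.cons_succ, Fin.cons_zero] at hind
  refine linearIndepOn_dualRestrict_ker ?_ hind.2
  simpa only [Fin.cons_comp_succ] using hind.1.comp_of_image (Fin.succ_injective m).injOn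

end GeneralPosition

section SignVector

variable {ι E : Type*} {m : ℕ}

section Module

variable [AddCommGroup E] [Module ℝ E]

noncomputable def signVector (φ : ι → Dual ℝ E) (x : E) : ι → SignType :=
  fun i => SignType.sign (φ i x)

def regionSigns (φ : ι → Dual ℝ E) : Set (ι → SignType) :=
  signVector φ '' {x | ∀ i, φ i x ≠ 0}

lemma mem_regionSigns_iff {φ : ι → Dual ℝ E} {s : ι → SignType} :
    s ∈ regionSigns φ ↔ (∀ i, s i ≠ 0) ∧ (signVector φ ⁻¹' {s}).Nonempty := by
  constructor
  · rintro ⟨x, hx, rfl⟩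
    exact ⟨fun i => sign_ne_zero.mpr (hx i), x, rfl⟩
  · rintro ⟨hs, x, rfl⟩
    exact ⟨x, fun i => sign_ne_zero.mp (hs i), rfl⟩

lemma signVector_preimage_singleton (φ : ι → Dual ℝ E) (s : ι → SignType) :
    signVector φ ⁻¹' {s} = ⋂ i, φ i ⁻¹' {r | SignType.sign r = s i} := by
  ext x
  simp [signVector, funext_iff]

lemma convex_signVector_preimage (φ : ι → Dual ℝ E) (s : ι → SignType) :
    Convex ℝ (signVector φ ⁻¹' {s}) := by
  rw [signVector_preimage_singleton]
  exact convex_iInter fun i => (convex_setOf_sign_eq (s i)).linear_preimage (φ i)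

lemma signVector_cons {n : ℕ} (f : Dual ℝ E) (ψ : Fin n → Dual ℝ E) (x : E) :
    signVector (Fin.cons f ψ : Fin (n + 1) → Dual ℝ E) x =
      Fin.cons (SignType.sign (f x)) (signVector ψ x) := by
  ext i
  cases i using Fin.cases <;> rfl

lemma regionSigns_eq_univ [IsEmpty ι] (φ : ι → Dual ℝ E) : regionSigns φ = univ :=
  eq_univ_of_forall fun _ => ⟨0, isEmptyElim, Subsingleton.elim _ _⟩

lemma regionSigns_eq_empty [Nonempty ι] [Subsingleton E] (φ : ι → Dual ℝ E) :
    regionSigns φ = ∅ :=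
  eq_empty_of_forall_notMem fun _ ⟨x, hx, _⟩ =>
    hx (Classical.arbitrary ι) (by rw [Subsingleton.elim x 0, map_zero])

lemma cons_mem_regionSigns_iff (f : Dual ℝ E) (ψ : Fin m → Dual ℝ E) (c : SignType)
    (t : Fin m → SignType) :
    Fin.cons c t ∈ regionSigns (Fin.cons f ψ : Fin (m + 1) → Dual ℝ E) ↔
      c ≠ 0 ∧ (∀ j, t j ≠ 0) ∧
        ∃ x ∈ signVector ψ ⁻¹' {t}, SignType.sign (f x) = c := by
  simp only [mem_regionSigns_iff, Fin.forall_fin_succ, Fin.cons_zero, Fin.cons_succ,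
    preimage, mem_singleton_iff, signVector_cons, Fin.cons_inj, Set.Nonempty, mem_ofPred_eq]
  constructor
  · rintro ⟨⟨hc, ht⟩, x, hfx, hx⟩
    exact ⟨hc, ht, x, hx, hfx⟩
  · rintro ⟨hc, ht, x, hx, hfx⟩
    exact ⟨⟨hc, ht⟩, x, hfx, hx⟩

lemma mem_regionSigns_dualRestrict_iff (f : Dual ℝ E) (ψ : Fin m → Dual ℝ E)
    (t : Fin m → SignType) :
    t ∈ regionSigns (fun i => (LinearMap.ker f).dualRestrict (ψ i)) ↔
      (∀ j, t j ≠ 0) ∧ ∃ x ∈ signVector ψ ⁻¹' {t}, f x = 0 := by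
  refine mem_regionSigns_iff.trans (and_congr_right fun _ => ⟨?_, ?_⟩)
  · rintro ⟨⟨x, hx⟩, hxt⟩
    exact ⟨x, hxt, hx⟩
  · rintro ⟨x, hxt, hx⟩
    exact ⟨⟨x, hx⟩, hxt⟩

end Module

variable [NormedAddCommGroup E] [NormedSpace ℝ E]

lemma IsOpen.exists_pos_and_exists_neg {U : Set E} (hU : IsOpen U) {f : Dual ℝ E} (hf : f ≠ 0)
    {x : E} (hx : x ∈ U) (hfx : f x = 0) : (∃ y ∈ U, 0 < f y) ∧ ∃ y ∈ U, f y < 0 := by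
  obtain ⟨ε, hε, hball⟩ := Metric.isOpen_iff.mp
    (f.isOpenMap_of_finiteDimensional (f.surjective hf) U hU) 0 ⟨x, hx, hfx⟩
  have hmem : ∀ t : ℝ, |t| < ε → ∃ y ∈ U, f y = t := fun t ht =>
    hball (by rwa [Metric.mem_ball, Real.dist_0_eq_abs])
  obtain ⟨y, hy, hfy⟩ := hmem (ε / 2) (by rw [abs_of_pos (half_pos hε)]; linarith)
  obtain ⟨z, hz, hfz⟩ := hmem (-(ε / 2)) (by rw [abs_neg, abs_of_pos (half_pos hε)]; linarith)
  exact ⟨⟨y, hy, hfy ▸ half_pos hε⟩, ⟨z, hz, by rw [hfz]; linarith⟩⟩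

variable [FiniteDimensional ℝ E]

lemma isOpen_signVector_preimage [Finite ι] (φ : ι → Dual ℝ E) {s : ι → SignType}
    (hs : ∀ i, s i ≠ 0) : IsOpen (signVector φ ⁻¹' {s}) := by
  rw [signVector_preimage_singleton]
  exact isOpen_iInter_of_finite fun i =>
    (isOpen_setOf_sign_eq (hs i)).preimage (φ i).continuous_of_finiteDimensional

theorem card_connectedComponents_eq_ncard_regionSigns [Finite ι] (φ : ι → Dual ℝ E) :
    Nat.card (ConnectedComponents {x : E // ∀ i, φ i x ≠ 0}) = (regionSigns φ).ncard := by
  have hne : ∀ x : {x : E // ∀ i, φ i x ≠ 0}, ∀ i, signVector φ x i ≠ 0 :=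
    fun x i => sign_ne_zero.mpr (x.2 i)
  rw [card_connectedComponents_eq_card_range
    (f := fun x : {x : E // ∀ i, φ i x ≠ 0} => signVector φ x),
    ← Nat.card_coe_set_eq, regionSigns, image_eq_range]
  · rfl
  · exact IsLocallyConstant.iff_isOpen_fiber_apply.mpr fun x =>
      (isOpen_signVector_preimage φ (hne x)).preimage continuous_subtype_val
  · intro x
    refine Topology.IsInducing.subtypeVal.isPreconnected_image.mp ?_
    have hsub : signVector φ ⁻¹' {signVector φ x} ⊆
        range (Subtype.val : {x : E // ∀ i, φ i x ≠ 0} → E) :=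
      fun y (hy : signVector φ y = signVector φ x) =>
        ⟨⟨y, fun i => sign_ne_zero.mp ((congrFun hy i).trans_ne (hne x i))⟩, rfl⟩
    convert (convex_signVector_preimage φ (signVector φ x)).isPreconnected
    exact image_preimage_eq_of_subset hsub

lemma ncard_regionSigns_cons {f : Dual ℝ E} (hf : f ≠ 0) (ψ : Fin m → Dual ℝ E) :
    (regionSigns (Fin.cons f ψ : Fin (m + 1) → Dual ℝ E)).ncard =
      (regionSigns ψ).ncard +
        (regionSigns fun i => (LinearMap.ker f).dualRestrict (ψ i)).ncard := by
  set R := regionSigns (Fin.cons f ψ : Fin (m + 1) → Dual ℝ E)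
  have hP : ∀ t, Fin.cons 1 t ∈ R ↔
      (∀ j, t j ≠ 0) ∧ ∃ x ∈ signVector ψ ⁻¹' {t}, 0 < f x :=
    fun t => (cons_mem_regionSigns_iff f ψ 1 t).trans (by simp only [sign_eq_one_iff]; simp)
  have hM : ∀ t, Fin.cons (-1) t ∈ R ↔
      (∀ j, t j ≠ 0) ∧ ∃ x ∈ signVector ψ ⁻¹' {t}, f x < 0 :=
    fun t => (cons_mem_regionSigns_iff f ψ (-1) t).trans (by simp only [sign_eq_neg_one_iff]; simp)
  have hunion : {t | Fin.cons 1 t ∈ R} ∪ {t | Fin.cons (-1) t ∈ R} = regionSigns ψ := by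
    ext t
    rw [mem_union, mem_ofPred_eq, mem_ofPred_eq, hP, hM, mem_regionSigns_iff, ← and_or_left]
    refine and_congr_right fun ht => ⟨?_, fun ⟨x, hx⟩ => ?_⟩
    · rintro (⟨x, hx, -⟩ | ⟨x, hx, -⟩) <;> exact ⟨x, hx⟩
    rcases lt_trichotomy (f x) 0 with h | h | h
    · exact Or.inr ⟨x, hx, h⟩
    · exact Or.inl ((isOpen_signVector_preimage ψ ht).exists_pos_and_exists_neg hf hx h).1
    · exact Or.inl ⟨x, hx, h⟩
  have hinter : {t | Fin.cons 1 t ∈ R} ∩ {t | Fin.cons (-1) t ∈ R} =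
      regionSigns fun i => (LinearMap.ker f).dualRestrict (ψ i) := by
    ext t
    rw [mem_inter_iff, mem_ofPred_eq, mem_ofPred_eq, hP, hM, mem_regionSigns_dualRestrict_iff,
      ← and_and_left]
    refine and_congr_right fun ht =>
      ⟨fun ⟨⟨x, hx, hfx⟩, ⟨y, hy, hfy⟩⟩ => ?_, fun ⟨x, hx, hfx⟩ =>
        (isOpen_signVector_preimage ψ ht).exists_pos_and_exists_neg hf hx hfx⟩
    exact (convex_signVector_preimage ψ t).isPreconnected.intermediate_value hy hx
      f.continuous_of_finiteDimensional.continuousOn ⟨hfy.le, hfx.le⟩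
  rw [ncard_eq_ncard_cons_one_add_ncard_cons_neg_one fun s hs => (mem_regionSigns_iff.mp hs).1 0,
    ← hunion, ← hinter, ncard_union_add_ncard_inter]

end SignVector

theorem ncard_regionSigns_of_inGeneralPosition {E : Type*} [NormedAddCommGroup E]
    [NormedSpace ℝ E] [FiniteDimensional ℝ E] {m : ℕ} (φ : Fin (m + 1) → Dual ℝ E)
    (hφ : InGeneralPosition ℝ φ) :
    (regionSigns φ).ncard = 2 * ∑ k ∈ Finset.range (finrank ℝ E), m.choose k := by
  rcases (finrank ℝ E).eq_zero_or_pos with hE | hE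
  · have := finrank_zero_iff.mp hE
    simp [regionSigns_eq_empty, hE]
  have hf := hφ.ne_zero hE 0
  obtain ⟨e, he⟩ := Nat.exists_eq_add_one_of_ne_zero hE.ne'
  rw [← Fin.cons_self_tail φ] at hφ ⊢
  rw [ncard_regionSigns_cons hf, he]
  cases m with
  | zero => simp [regionSigns_eq_univ, Finset.sum_range_succ']
  | succ m =>
    have hker : finrank ℝ (LinearMap.ker (φ 0)) = e := by
      have := (φ 0).finrank_ker_add_one_of_ne_zero hf
      omega
    rw [ncard_regionSigns_of_inGeneralPosition _ hφ.tail,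
      ncard_regionSigns_of_inGeneralPosition _ (hφ.dualRestrict_ker hf), he, hker,
      sum_range_choose_succ]
    ring

theorem hyperplane_arrangement_regions_general (d N : ℕ) (hN : 0 < N)
    (w : Fin N → (Fin d → ℝ))
    (hgen : ∀ s : Finset (Fin N), s.card ≤ d →
      LinearIndependent ℝ (fun i : s => w i)) :
    Nat.card (ConnectedComponents
        {x : Fin d → ℝ // ∀ i : Fin N, dotProduct (w i) x ≠ 0}) =
      2 * ∑ k ∈ Finset.range d, (N - 1).choose k := by
  obtain ⟨m, rfl⟩ := Nat.exists_eq_add_one_of_ne_zero hN.ne'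
  let φ : Fin (m + 1) → Dual ℝ (Fin d → ℝ) := fun i => dotProductEquiv ℝ (Fin d) (w i)
  have hφ : InGeneralPosition ℝ φ := fun s hs =>
    (hgen s (by rwa [finrank_fin_fun] at hs)).map' _ (dotProductEquiv ℝ (Fin d)).ker
  have h := card_connectedComponents_eq_ncard_regionSigns φ
  rw [ncard_regionSigns_of_inGeneralPosition φ hφ, finrank_fin_fun] at h
  exact h

/-- `N` hyperplanes through the origin of `ℝ^d` in general position divide the space
into exactly `2 ∑_{k=0}^{d-1} C(N-1, k)` regions (connected components of the
complement of the union of the hyperplanes). -/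
theorem hyperplane_arrangement_regions (d N : ℕ) (hd : 0 < d) (hN : 0 < N)
    (w : Fin N → (Fin d → ℝ))
    (hgen : ∀ s : Finset (Fin N), s.card ≤ d →
      LinearIndependent ℝ (fun i : s => w i)) :
    Nat.card (ConnectedComponents
        {x : Fin d → ℝ // ∀ i : Fin N, dotProduct (w i) x ≠ 0}) =
      2 * ∑ k ∈ Finset.range d, (N - 1).choose k :=
  hyperplane_arrangement_regions_general d N hN w hgen
end

section
/- Let p be a probability distribution on a finite set of size 2^{2N_r} such that p(i) ≥ q/M for i = 1,…,M (where M ≤ 2^{2N_r} and 0 < q ≤ 1). Then the Shannon entropy H(p) = -∑ᵢ p(i)·log₂ p(i) satisfies H(p) ≥ min(a₁, a₂) where a₁ = -(M-1)(q/M)log₂(q/M) - (1-(M-1)q/M)·log₂(1-(M-1)q/M) and a₂ = -q·log₂(q/M) - (1-q)·log₂(1-q). -/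
/-!
Write `h = negMulLog`, `c = q / M` and let `S` be the mass of the first `M` entries. A concave
`φ` on `[0, ∞)` with `φ 0 = 0` is subadditive; applied to `r ↦ h (c + r) - h c` this shows that
among entries bounded below by `c` the entropy only drops when all excess mass is moved onto a
single entry, and applied to `h` itself that the remaining entries contribute at least
`h (1 - S)`. What is left is a concave function of `S ∈ [q, 1]`, so it is bounded below by its
values at the endpoints: `S = 1` gives `a₁` and `S = q` gives `a₂`.
-/

open Real Finset

namespace ConcaveOn

variable {f : ℝ → ℝ}

lemma mul_le_map_mul (hf : ConcaveOn ℝ (Set.Ici 0) f) (h0 : 0 ≤ f 0) {x t : ℝ} (hx : 0 ≤ x)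
    (ht₀ : 0 ≤ t) (ht₁ : t ≤ 1) : t * f x ≤ f (t * x) := by
  have h := hf.2 (Set.mem_Ici.2 hx) (Set.mem_Ici.2 le_rfl) ht₀ (sub_nonneg.2 ht₁)
    (add_sub_cancel t 1)
  simp only [smul_eq_mul, mul_zero, add_zero] at h
  nlinarith

lemma map_add_le (hf : ConcaveOn ℝ (Set.Ici 0) f) (h0 : 0 ≤ f 0) {x y : ℝ} (hx : 0 ≤ x)
    (hy : 0 ≤ y) : f (x + y) ≤ f x + f y := by
  rcases (add_nonneg hx hy).eq_or_lt with hs | hs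
  · obtain ⟨rfl, rfl⟩ : x = 0 ∧ y = 0 := ⟨by linarith, by linarith⟩
    simpa using h0
  have hx' := hf.mul_le_map_mul h0 hs.le (div_nonneg hx hs.le)
    (div_le_one_of_le₀ (by linarith) hs.le)
  have hy' := hf.mul_le_map_mul h0 hs.le (div_nonneg hy hs.le)
    (div_le_one_of_le₀ (by linarith) hs.le)
  rw [div_mul_cancel₀ _ hs.ne'] at hx' hy'
  calc f (x + y) = (x / (x + y) + y / (x + y)) * f (x + y) := by
        rw [← add_div, div_self hs.ne', one_mul]
    _ ≤ f x + f y := by linarith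

lemma map_sum_le {ι : Type*} (hf : ConcaveOn ℝ (Set.Ici 0) f) (h0 : f 0 = 0) (s : Finset ι)
    {g : ι → ℝ} (hg : ∀ i ∈ s, 0 ≤ g i) : f (∑ i ∈ s, g i) ≤ ∑ i ∈ s, f (g i) :=
  Finset.le_sum_of_subadditive_on_pred f (0 ≤ ·) h0.le
    (fun _ _ hx hy => hf.map_add_le h0.ge hx hy) (fun _ _ => add_nonneg) g hg

lemma le_sum_map_of_forall_le {ι : Type*} {c : ℝ} (hf : ConcaveOn ℝ (Set.Ici c) f) (s : Finset ι)
    {g : ι → ℝ} (hg : ∀ i ∈ s, c ≤ g i) :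
    f (∑ i ∈ s, g i - (#s - 1) * c) + (#s - 1) * f c ≤ ∑ i ∈ s, f (g i) := by
  have hφ : ConcaveOn ℝ (Set.Ici 0) fun r => f (c + r) - f c := by
    refine ((hf.comp_affineMap (AffineMap.const ℝ ℝ c + AffineMap.id ℝ ℝ)).subset ?_
      (convex_Ici 0)).sub (convexOn_const (f c) (convex_Ici 0))
    intro r hr
    simpa using hr
  have h := hφ.map_sum_le (by simp) s (g := fun i => g i - c) fun i hi => sub_nonneg.2 (hg i hi)
  simp only [add_sub_cancel, sum_sub_distrib, sum_const, nsmul_eq_mul] at h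
  rw [show c + (∑ i ∈ s, g i - #s * c) = ∑ i ∈ s, g i - (#s - 1) * c by ring] at h
  linarith

lemma comp_sub_add_comp_rsub (hf : ConcaveOn ℝ (Set.Ici 0) f) (a b : ℝ) :
    ConcaveOn ℝ (Set.Icc a b) fun x => f (x - a) + f (b - x) := by
  refine ConcaveOn.add ?_ ?_
  · have := hf.comp_affineMap (AffineMap.id ℝ ℝ - AffineMap.const ℝ ℝ a)
    refine this.subset ?_ (convex_Icc a b)
    intro x hx; simp [hx.1]
  · have := hf.comp_affineMap (AffineMap.const ℝ ℝ b - AffineMap.id ℝ ℝ)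
    refine this.subset ?_ (convex_Icc a b)
    intro x hx; simp [hx.2]

end ConcaveOn

theorem min_le_sum_negMulLog_of_forall_le {ι : Type*} [Fintype ι] [DecidableEq ι] {p : ι → ℝ}
    (hp0 : ∀ i, 0 ≤ p i) (hp1 : ∑ i, p i = 1) {A : Finset ι} {c : ℝ} (hc : 0 ≤ c)
    (hA : ∀ i ∈ A, c ≤ p i) :
    min ((#A - 1) * negMulLog c + negMulLog (1 - (#A - 1) * c))
        (#A * negMulLog c + negMulLog (1 - #A * c))
      ≤ ∑ i, negMulLog (p i) := by
  set n : ℝ := (#A : ℝ)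
  set S := ∑ i ∈ A, p i
  have hS_lower : n * c ≤ S := by simpa using card_nsmul_le_sum A p c hA
  have hS_upper : S ≤ 1 := hp1 ▸ sum_le_univ_sum_of_nonneg hp0
  have hA_block : negMulLog (S - (n - 1) * c) + (n - 1) * negMulLog c
      ≤ ∑ i ∈ A, negMulLog (p i) :=
    (concaveOn_negMulLog.subset (Set.Ici_subset_Ici.2 hc) (convex_Ici c)).le_sum_map_of_forall_le
      A hA
  have hAc_block : negMulLog (1 - S) ≤ ∑ i ∈ Aᶜ, negMulLog (p i) := by
    have hAc : ∑ i ∈ Aᶜ, p i = 1 - S := by rw [← hp1, ← sum_add_sum_compl A]; ring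
    exact hAc ▸ concaveOn_negMulLog.map_sum_le negMulLog_zero _ fun i _ => hp0 i
  have hS := (concaveOn_negMulLog.comp_sub_add_comp_rsub ((n - 1) * c) 1).min_le_of_mem_Icc
    (x := n * c) (y := 1) (z := S) ⟨by linarith, by linarith⟩ ⟨by linarith, le_rfl⟩
    ⟨hS_lower, hS_upper⟩
  rw [show n * c - (n - 1) * c = c by ring, sub_self, negMulLog_zero, add_zero] at hS
  calc _ = (n - 1) * negMulLog c + min (negMulLog c + negMulLog (1 - n * c))
        (negMulLog (1 - (n - 1) * c)) := by
        rw [min_comm, ← min_add_add_left]; congr 1; ring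
    _ ≤ ∑ i, negMulLog (p i) := by rw [← sum_add_sum_compl A]; linarith

/-- If a probability distribution `p` on a set of size `2^{2N_r}` satisfies
`p(i) ≥ q/M` for the first `M` indices, then its Shannon entropy is at least
`min(a₁, a₂)` where `a₁, a₂` are the entropies of the two kinds of extreme
points of the constraint polytope. -/
theorem entropy_lower_bound_extreme_points (Nr M : ℕ) (hM : 1 ≤ M)
    (hM2 : M ≤ 2 ^ (2 * Nr)) (q : ℝ) (hq : q ∈ Set.Ioc (0:ℝ) 1)
    (p : Fin (2 ^ (2 * Nr)) → ℝ) (hp0 : ∀ i, 0 ≤ p i) (hp1 : ∑ i, p i = 1)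
    (hpm : ∀ i : Fin (2 ^ (2 * Nr)), (i : ℕ) < M → q / M ≤ p i) :
    min
      (-((M - 1) * (q / M) * Real.logb 2 (q / M))
        - (1 - (M - 1) * q / M) * Real.logb 2 (1 - (M - 1) * q / M))
      (-(q * Real.logb 2 (q / M)) - (1 - q) * Real.logb 2 (1 - q))
      ≤ -∑ i, p i * Real.logb 2 (p i) := by
  have hM0 : (M : ℝ) ≠ 0 := by positivity
  have hlog2 : 0 < log 2 := log_pos one_lt_two
  set A := univ.filter fun i : Fin (2 ^ (2 * Nr)) => (i : ℕ) < M
  have hA : (#A : ℝ) = M := by rw [Fin.card_filter_val_lt, min_eq_right hM2]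
  have key := min_le_sum_negMulLog_of_forall_le hp0 hp1 (A := A) (c := q / M)
    (div_nonneg hq.1.le M.cast_nonneg) fun i hi => hpm i (mem_filter.1 hi).2
  rw [hA, mul_div_cancel₀ _ hM0] at key
  calc _ = min (((M - 1) * negMulLog (q / M) + negMulLog (1 - (M - 1) * (q / M))) / log 2)
        ((M * negMulLog (q / M) + negMulLog (1 - q)) / log 2) := by
        congr 1 <;> simp only [negMulLog, logb] <;> field_simp <;> ring
    _ ≤ (∑ i, negMulLog (p i)) / log 2 := by
        rw [min_div_div_right hlog2.le]; exact div_le_div_of_nonneg_right key hlog2.le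
    _ = -∑ i, p i * logb 2 (p i) := by
        rw [sum_div, ← sum_neg_distrib]
        refine sum_congr rfl fun i _ => ?_
        simp only [negMulLog, logb]; ring
end
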